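/- arXiv:2512.07556 — 2 statements merged into one kernel-verified Lean document; each statement's English description precedes it below -/
import Mathlib

section
/- Suppose a ≠ 0 and b > 10a²/9. Then there exist x₂ < 0 < x₁ with A(x₂) = A(x₁) = 0 and A(x) ≤ 0 for all x ∈ [x₂, x₁]. -/
/-!
`A(0) = 10a² - 9b < 0`, while `A` is a quartic with leading coefficient `9b³ > 0`, so `A` becomes
positive on either side of `0`; the first roots to the left and right of `0` bound an interval on
which `A ≤ 0`. Since `A(-x)` is `A(x)` with `a` replaced by `-a`, it suffices to treat the right side.
-/

open Filter Polynomial Set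

/-- The polynomial `A(x)`. -/
def Apoly (a b x : ℝ) : ℝ :=
  10 * a ^ 2 - 9 * b + a * (30 * b + 4 * a ^ 2) * x + b * (36 * b + 16 * a ^ 2) * x ^ 2
    + 24 * a * b ^ 2 * x ^ 3 + 9 * b ^ 3 * x ^ 4

section FirstCrossing

variable {α δ : Type*} [ConditionallyCompleteLinearOrder α] [TopologicalSpace α] [OrderTopology α]
  [DenselyOrdered α] [LinearOrder δ] [TopologicalSpace δ] [OrderClosedTopology δ]

theorem exists_first_eq_of_lt_of_lt {f : α → δ} {l r : α} {y : δ} (hlr : l ≤ r)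
    (hf : ContinuousOn f (Icc l r)) (hl : f l < y) (hr : y < f r) :
    ∃ c ∈ Ioc l r, f c = y ∧ ∀ x ∈ Icc l c, f x ≤ y := by
  set S := Icc l r ∩ f ⁻¹' {y}
  have hS : IsCompact S :=
    isCompact_Icc.of_isClosed_subset (hf.preimage_isClosed_of_isClosed isClosed_Icc
      isClosed_singleton) inter_subset_left
  obtain ⟨z, hz, hfz⟩ := intermediate_value_Icc hlr hf ⟨hl.le, hr.le⟩
  obtain ⟨c, ⟨⟨hlc, hcr⟩, hfc⟩, hc_least⟩ := hS.exists_isLeast ⟨z, hz, hfz⟩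
  have hc_ne : l ≠ c := by
    rintro rfl
    exact hl.ne hfc
  refine ⟨c, ⟨lt_of_le_of_ne hlc hc_ne, hcr⟩, hfc, fun x hx => not_lt.1 fun hxy => ?_⟩
  obtain ⟨w, hw, hfw⟩ :=
    intermediate_value_Icc hx.1 (hf.mono (Icc_subset_Icc_right (hx.2.trans hcr))) ⟨hl.le, hxy.le⟩
  have hcw : c ≤ w := hc_least ⟨⟨hw.1, hw.2.trans (hx.2.trans hcr)⟩, hfw⟩
  have hwx : w = x := le_antisymm hw.2 (hx.2.trans hcw)
  exact hxy.ne' (hwx ▸ hfw)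

end FirstCrossing

theorem apoly_neg (a b x : ℝ) : Apoly a b (-x) = Apoly (-a) b x := by
  unfold Apoly
  ring

theorem continuous_apoly (a b : ℝ) : Continuous (Apoly a b) := by
  unfold Apoly
  fun_prop

theorem tendsto_apoly_atTop (a : ℝ) {b : ℝ} (hb : 0 < b) : Tendsto (Apoly a b) atTop atTop := by
  let P : ℝ[X] := C (9 * b ^ 3) * X ^ 4 + C (24 * a * b ^ 2) * X ^ 3
    + C (b * (36 * b + 16 * a ^ 2)) * X ^ 2 + C (a * (30 * b + 4 * a ^ 2)) * X
    + C (10 * a ^ 2 - 9 * b)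
  have hP : (fun x => P.eval x) = Apoly a b := by
    ext x
    simp only [P, eval_add, eval_mul, eval_C, eval_pow, eval_X, Apoly]
    ring
  have hdeg : P.natDegree = 4 := by
    simp only [P]
    compute_degree!
    exact hb.ne'
  have hlc : P.leadingCoeff = 9 * b ^ 3 := by
    rw [leadingCoeff, hdeg]
    simp only [P, coeff_add, coeff_C_mul, coeff_X_pow, coeff_X, coeff_C]
    norm_num
  rw [← hP]
  refine P.tendsto_atTop_of_leadingCoeff_nonneg ?_ (hlc ▸ by positivity)
  rw [← natDegree_pos_iff_degree_pos, hdeg]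
  norm_num

theorem exists_pos_root_apoly (a : ℝ) {b : ℝ} (hb : 10 * a ^ 2 / 9 < b) :
    ∃ x₁, 0 < x₁ ∧ Apoly a b x₁ = 0 ∧ ∀ x ∈ Icc 0 x₁, Apoly a b x ≤ 0 := by
  have hb₀ : 0 < b := lt_of_le_of_lt (by positivity) hb
  have h₀ : Apoly a b 0 < 0 := by
    simp only [Apoly]
    linarith
  obtain ⟨T, hT, hT₀⟩ :=
    (((tendsto_apoly_atTop a hb₀).eventually_gt_atTop 0).and (eventually_ge_atTop 0)).exists
  obtain ⟨x₁, hx₁, hroot, hle⟩ :=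
    exists_first_eq_of_lt_of_lt hT₀ (continuous_apoly a b).continuousOn h₀ hT
  exact ⟨x₁, hx₁.1, hroot, hle⟩

theorem stmt10_general (a b : ℝ) (hb : 10 * a ^ 2 / 9 < b) :
    ∃ x₂ x₁ : ℝ, x₂ < 0 ∧ 0 < x₁ ∧ Apoly a b x₂ = 0 ∧ Apoly a b x₁ = 0 ∧
      ∀ x ∈ Set.Icc x₂ x₁, Apoly a b x ≤ 0 := by
  obtain ⟨x₁, hx₁, hroot₁, hle₁⟩ := exists_pos_root_apoly a hb
  obtain ⟨y, hy, hroot₂, hle₂⟩ := exists_pos_root_apoly (-a) (b := b) (by rwa [neg_sq])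
  refine ⟨-y, x₁, neg_neg_iff_pos.2 hy, hx₁, by rwa [apoly_neg], hroot₁, fun x hx => ?_⟩
  rcases le_total x 0 with hx₀ | hx₀
  · rw [← neg_neg x, apoly_neg]
    exact hle₂ (-x) ⟨neg_nonneg.2 hx₀, neg_le.1 hx.1⟩
  · exact hle₁ x ⟨hx₀, hx.2⟩

theorem stmt10 (a b : ℝ) (ha : a ≠ 0) (hb : 10 * a ^ 2 / 9 < b) :
    ∃ x₂ x₁ : ℝ, x₂ < 0 ∧ 0 < x₁ ∧ Apoly a b x₂ = 0 ∧ Apoly a b x₁ = 0 ∧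
      ∀ x ∈ Set.Icc x₂ x₁, Apoly a b x ≤ 0 :=
  stmt10_general a b hb
end

section
/- For all real numbers A, B with A ≥ 1, B ≥ 1 and A + B ≤ 6 + 4√3, one has A² − AB + 2B + 2 ≥ 0. Consequently, for F(x) = cosh x − 1 and G(y) = cosh y − 1, M(x,y) ≤ 0 for all (x,y) ∈ ℝ² with cosh x + cosh y − 2 ≤ 4 + 4√3 (i.e., with H(x,y) ≤ 4 + 4√3). -/
/-- The function `M(x,y)` built from `F` and `G`. -/
noncomputable def Mfun (F G : ℝ → ℝ) (x y : ℝ) : ℝ :=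
  (6 * F x * (deriv (deriv F) x) ^ 2 - 3 * (deriv F x) ^ 2 * deriv (deriv F) x
      - 2 * F x * deriv F x * deriv (deriv (deriv F)) x) * G y * (deriv G y) ^ 2
    + F x * (deriv F x) ^ 2 * deriv (deriv F) x
      * ((deriv G y) ^ 2 - 2 * G y * deriv (deriv G) y)

open Real

/-- The quadratic is affine in `B` with slope `2 - A`. For `A ≤ 2` its minimum is at `B = 1`;
for `A > 2` it is at `B = 6 + 4√3 - A`, where it equals `2 (A - 2 - √3)²`, so the bound is sharp
at `A = 2 + √3`. -/
theorem sq_sub_mul_add_two_mul_add_two_nonneg {A B : ℝ} (hB : 1 ≤ B)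
    (hAB : A + B ≤ 6 + 4 * √3) : 0 ≤ A ^ 2 - A * B + 2 * B + 2 := by
  rcases le_or_gt A 2 with hA | hA
  · have hsplit : A ^ 2 - A * B + 2 * B + 2 = (A - 1 / 2) ^ 2 + 15 / 4 + (2 - A) * (B - 1) := by
      ring
    rw [hsplit]
    exact add_nonneg (by positivity) (mul_nonneg (by linarith) (by linarith))
  · have hsplit : A ^ 2 - A * B + 2 * B + 2
        = 2 * (A - (2 + √3)) ^ 2 + (A - 2) * (6 + 4 * √3 - A - B) := by
      linear_combination (-2 : ℝ) * sq_sqrt (show (0 : ℝ) ≤ 3 by norm_num)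
    rw [hsplit]
    exact add_nonneg (by positivity) (mul_nonneg (by linarith) (by linarith))

theorem deriv_cosh_sub_one : deriv (fun x => cosh x - 1) = sinh := by
  ext x
  simp

theorem Mfun_cosh_sub_one (x y : ℝ) :
    Mfun (fun x => cosh x - 1) (fun y => cosh y - 1) x y
      = -((cosh x - 1) ^ 2 * (cosh y - 1) ^ 2
          * (cosh x ^ 2 - cosh x * cosh y + 2 * cosh y + 2)) := by
  simp only [Mfun, deriv_cosh_sub_one, Real.deriv_sinh, Real.deriv_cosh]
  -- after expansion `sinh` occurs only through `sinh ^ 2`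
  ring_nf
  simp only [sinh_sq]
  ring

theorem stmt18 :
    (∀ A B : ℝ, 1 ≤ A → 1 ≤ B → A + B ≤ 6 + 4 * Real.sqrt 3 →
      0 ≤ A ^ 2 - A * B + 2 * B + 2) ∧
    (∀ x y : ℝ, Real.cosh x + Real.cosh y - 2 ≤ 4 + 4 * Real.sqrt 3 →
      Mfun (fun x => Real.cosh x - 1) (fun y => Real.cosh y - 1) x y ≤ 0) := by
  refine ⟨fun A B _ hB hAB => sq_sub_mul_add_two_mul_add_two_nonneg hB hAB, fun x y hH => ?_⟩
  have hQ := sq_sub_mul_add_two_mul_add_two_nonneg (A := cosh x) (one_le_cosh y) (by linarith)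
  rw [Mfun_cosh_sub_one, neg_nonpos]
  exact mul_nonneg (by positivity) hQ
end
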